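/- arXiv:1209.6616 — 2 statements merged into one kernel-verified Lean document; each statement's English description precedes it below -/
import Mathlib

section
/- Let x < v < y < u be four distinct points on the boundary of the hyperbolic plane (viewed as points of the real line in the upper half-plane model), let c be the intersection point of the geodesics with endpoints v,u and x,y, and let f be any point in the interior of the geodesic segment from c to y. Define t = ρ_f(u) and w = ρ_f(v), where ρ_f denotes rotation by π about f. Then x < v < t < y < w < u on the boundary, f is the intersection of the geodesics with endpoints x,y and t,u, and f lies on the geodesic with endpoints v,w. -/
/- STATEMENT 0: Lemma 1 (chooselem), in the upper half-plane model.
Boundary points are reals (∞ is the fixed point v_∞).  A point of H² is (a, b) with b > 0.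
The geodesic with boundary endpoints p, q is the semicircle {(a,b) : (a-p)(a-q) + b² = 0, b > 0}.
For f = (a,b), rotation by π about f acts on the boundary by z ↦ (a z - (a²+b²))/(z - a).
The interior of the geodesic segment from c to y (on the geodesic with endpoints x < y,
where c has first coordinate c₁ ∈ (x, y)) is exactly the set of points of that geodesic
whose first coordinate lies strictly between c₁ and y. -/
theorem stmt_0
    (x v y u : ℝ) (hxv : x < v) (hvy : v < y) (hyu : y < u)
    -- c = (c₁, c₂) is the intersection of the geodesics v u and x y
    (c₁ c₂ : ℝ) (hc₂ : 0 < c₂)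
    (hcvu : (c₁ - v) * (c₁ - u) + c₂ ^ 2 = 0)
    (hcxy : (c₁ - x) * (c₁ - y) + c₂ ^ 2 = 0)
    -- f = (a, b) is in the interior of the segment of the geodesic x y from c to y
    (a b : ℝ) (hb : 0 < b)
    (hfxy : (a - x) * (a - y) + b ^ 2 = 0)
    (hca : c₁ < a) (hay : a < y)
    -- t = ρ_f(u), w = ρ_f(v)
    (t w : ℝ)
    (ht : t = (a * u - (a ^ 2 + b ^ 2)) / (u - a))
    (hw : w = (a * v - (a ^ 2 + b ^ 2)) / (v - a)) :
    (x < v ∧ v < t ∧ t < y ∧ y < w ∧ w < u) ∧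
    -- f is the intersection of the geodesics x y and t u:
    (a - x) * (a - y) + b ^ 2 = 0 ∧ (a - t) * (a - u) + b ^ 2 = 0 ∧
    -- f lies on the geodesic v w:
    (a - v) * (a - w) + b ^ 2 = 0 := by

  -- basic position facts
  have hvc : v < c₁ := by nlinarith [sq_nonneg c₂, hc₂]
  have hxa : x < a := by nlinarith [sq_nonneg b]
  have hau : a < u := lt_trans hay hyu
  have hva : v < a := lt_trans hvc hca
  have hua' : (0:ℝ) < u - a := by linarith
  have hav' : v - a < 0 := by linarith
  have key : (a - v) * (u - a) - b ^ 2 = (u + v - x - y) * (a - c₁) := by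
    linear_combination -hfxy - hcvu + hcxy
  have keypos : (a - v) * (u - a) - b ^ 2 > 0 := by
    rw [key]
    exact mul_pos (by linarith) (by linarith)
  refine ⟨⟨hxv, ?_, ?_, ?_, ?_⟩, hfxy, ?_, ?_⟩
  · rw [ht, lt_div_iff₀ hua']; nlinarith
  · rw [ht, div_lt_iff₀ hua']; nlinarith [sq_nonneg b, mul_pos (show (0:ℝ) < y - a by linarith) hua']
  · rw [hw, lt_div_iff_of_neg hav']
    nlinarith [mul_pos (show (0:ℝ) < y - a by linarith) (show (0:ℝ) < v - x by linarith)]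
  · rw [hw, div_lt_iff_of_neg hav']; nlinarith
  · rw [ht]; field_simp; ring
  · rw [hw]
    have : v - a ≠ 0 := ne_of_lt hav'
    field_simp
    ring
end

section
/- Let K be a field with discrete valuation v, and let Γ ≤ GL₂(K) be generated by finitely many elements ρ_j = C_j J C_j⁻¹ with J = [[0,-1],[1,0]] and C_j ∈ GL₂(K). Then the following are equivalent: (1) Γ fixes some vertex of the tree T_v; (2) the intersection over j of the sets C_j · Fix_{T_v}(J) is nonempty; (3) for every pair (m,k), the element ρ_m ρ_k fixes some vertex of T_v. -/
/-!
Conjugating by `C_j` identifies `Fix(ρ_j)` with `C_j · Fix(J)`, which gives (1) ⇔ (2).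

For (3) ⇒ (1) we do not use Serre's fixed-point lemma but build the fixed lattice directly.
Over a valuation ring a lattice is free, so a matrix of determinant `1` fixing the class of a
lattice is, up to a scalar, conjugate into `GL₂(O)`; hence `tr(ρ_m ρ_k) ∈ O`. The `ρ_j` are
traceless with `ρ_j² = -1`, so `ρ_m ρ_k + ρ_k ρ_m = tr(ρ_m ρ_k)` and the `ρ_j` satisfy
Clifford relations over `O`. Therefore the `O`-span `Λ` of the increasing products of distinct
`ρ_j` is finitely generated and stable under left multiplication by each `ρ_j`, and the lattice
`Λ · O²` is fixed by every `ρ_j`.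
-/

open Matrix

variable {K : Type*} [Field K]

/- `matMap O g L` is the image of the O-lattice L ⊆ K² under the matrix g. -/
noncomputable def matMap (O : Subring K) (g : Matrix (Fin 2) (Fin 2) K)
    (L : Submodule O (Fin 2 → K)) : Submodule O (Fin 2 → K) :=
  Submodule.map ((Matrix.toLin' g).restrictScalars O) L

/- A lattice in K² is a finitely generated O-submodule spanning K² over K. -/
def IsLattice (O : Subring K) (L : Submodule O (Fin 2 → K)) : Prop :=
  L.FG ∧ Submodule.span K (L : Set (Fin 2 → K)) = ⊤

/- Two lattices are equivalent (define the same vertex of the tree T_v) iff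
they differ by a scalar in K^×. -/
noncomputable def LatEquiv (O : Subring K) (L L' : Submodule O (Fin 2 → K)) : Prop :=
  ∃ c : K, c ≠ 0 ∧ matMap O (c • (1 : Matrix (Fin 2) (Fin 2) K)) L = L'

/- g fixes the vertex [L] of the tree T_v iff g·L is equivalent to L. -/
noncomputable def FixesClass (O : Subring K) (g : Matrix (Fin 2) (Fin 2) K)
    (L : Submodule O (Fin 2 → K)) : Prop :=
  LatEquiv O (matMap O g L) L

/- The standard lattice O² ⊆ K². -/
noncomputable def stdLat (O : Subring K) : Submodule O (Fin 2 → K) :=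
  Submodule.span O (Set.range fun i : Fin 2 => (Pi.single i 1 : Fin 2 → K))

variable {O : Subring K}

lemma matMap_mul (g h : Matrix (Fin 2) (Fin 2) K) (L : Submodule O (Fin 2 → K)) :
    matMap O (g * h) L = matMap O g (matMap O h L) := by
  simp only [matMap, ← Submodule.map_comp, Matrix.toLin'_mul]
  rfl

lemma matMap_one (L : Submodule O (Fin 2 → K)) : matMap O 1 L = L := by
  simp only [matMap, Matrix.toLin'_one]
  exact Submodule.map_id L

lemma matMap_neg_one (L : Submodule O (Fin 2 → K)) : matMap O (-1) L = L := by
  ext x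
  simp only [matMap, Submodule.mem_map, LinearMap.restrictScalars_apply, Matrix.toLin'_apply,
    Matrix.neg_mulVec, Matrix.one_mulVec]
  exact ⟨fun ⟨y, hy, hyx⟩ => hyx ▸ neg_mem hy, fun hx => ⟨-x, neg_mem hx, neg_neg x⟩⟩

lemma matMap_inv_matMap {g : Matrix (Fin 2) (Fin 2) K} (hg : IsUnit g)
    (L : Submodule O (Fin 2 → K)) : matMap O g⁻¹ (matMap O g L) = L := by
  rw [← matMap_mul, Matrix.nonsing_inv_mul g ((Matrix.isUnit_iff_isUnit_det g).mp hg), matMap_one]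

lemma matMap_matMap_inv {g : Matrix (Fin 2) (Fin 2) K} (hg : IsUnit g)
    (L : Submodule O (Fin 2 → K)) : matMap O g (matMap O g⁻¹ L) = L := by
  rw [← matMap_mul, Matrix.mul_nonsing_inv g ((Matrix.isUnit_iff_isUnit_det g).mp hg), matMap_one]

lemma matMap_smul_one_matMap (c : K) (g : Matrix (Fin 2) (Fin 2) K)
    (L : Submodule O (Fin 2 → K)) :
    matMap O (c • 1) (matMap O g L) = matMap O (c • g) L := by
  rw [← matMap_mul, smul_one_mul]

namespace LatEquiv

lemma refl (L : Submodule O (Fin 2 → K)) : LatEquiv O L L :=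
  ⟨1, one_ne_zero, by rw [one_smul, matMap_one]⟩

lemma symm {L L' : Submodule O (Fin 2 → K)} (h : LatEquiv O L L') : LatEquiv O L' L := by
  obtain ⟨c, hc, rfl⟩ := h
  refine ⟨c⁻¹, inv_ne_zero hc, ?_⟩
  rw [matMap_smul_one_matMap, smul_smul, inv_mul_cancel₀ hc, one_smul, matMap_one]

lemma trans {L L' L'' : Submodule O (Fin 2 → K)} (h : LatEquiv O L L')
    (h' : LatEquiv O L' L'') : LatEquiv O L L'' := by
  obtain ⟨c, hc, rfl⟩ := h
  obtain ⟨c', hc', rfl⟩ := h'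
  exact ⟨c' * c, mul_ne_zero hc' hc, by rw [matMap_smul_one_matMap, smul_smul]⟩

lemma matMap {L L' : Submodule O (Fin 2 → K)} (g : Matrix (Fin 2) (Fin 2) K)
    (h : LatEquiv O L L') : LatEquiv O (matMap O g L) (matMap O g L') := by
  obtain ⟨c, hc, rfl⟩ := h
  refine ⟨c, hc, ?_⟩
  rw [← matMap_mul, ← matMap_mul, smul_one_mul, mul_smul_one]

lemma matMap_iff {g : Matrix (Fin 2) (Fin 2) K} (hg : IsUnit g)
    {L L' : Submodule O (Fin 2 → K)} :
    LatEquiv O (_root_.matMap O g L) (_root_.matMap O g L') ↔ LatEquiv O L L' := by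
  refine ⟨fun h => ?_, LatEquiv.matMap g⟩
  simpa only [matMap_inv_matMap hg] using h.matMap g⁻¹

end LatEquiv

namespace FixesClass

lemma of_matMap_eq {g : Matrix (Fin 2) (Fin 2) K} {L : Submodule O (Fin 2 → K)}
    (h : matMap O g L = L) : FixesClass O g L := by
  rw [FixesClass, h]
  exact LatEquiv.refl L

lemma mul {g h : Matrix (Fin 2) (Fin 2) K} {L : Submodule O (Fin 2 → K)}
    (hg : FixesClass O g L) (hh : FixesClass O h L) : FixesClass O (g * h) L := by
  unfold FixesClass at *
  rw [matMap_mul]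
  exact (hh.matMap g).trans hg

lemma of_latEquiv {g : Matrix (Fin 2) (Fin 2) K} {L L' : Submodule O (Fin 2 → K)}
    (hL : LatEquiv O L L') (hg : FixesClass O g L) : FixesClass O g L' :=
  (hL.symm.matMap g).trans (hg.trans hL)

lemma conj_iff {C : Matrix (Fin 2) (Fin 2) K} (hC : IsUnit C) {g : Matrix (Fin 2) (Fin 2) K}
    {L : Submodule O (Fin 2 → K)} :
    FixesClass O (C * g * C⁻¹) (matMap O C L) ↔ FixesClass O g L := by
  rw [FixesClass, matMap_mul, matMap_mul, matMap_inv_matMap hC, LatEquiv.matMap_iff hC]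
  rfl

end FixesClass

lemma isLattice_matMap {g : Matrix (Fin 2) (Fin 2) K} (hg : IsUnit g)
    {L : Submodule O (Fin 2 → K)} (hL : IsLattice O L) : IsLattice O (matMap O g L) := by
  refine ⟨hL.1.map _, ?_⟩
  have hspan : Submodule.span K (matMap O g L : Set (Fin 2 → K))
      = Submodule.map (Matrix.toLin' g) (Submodule.span K L) :=
    Submodule.span_image _
  rw [hspan, hL.2, Submodule.map_top, LinearMap.range_eq_top]
  exact (Matrix.toLinearEquiv' g hg.invertible).surjective

lemma IsLattice.of_le {L₀ L : Submodule O (Fin 2 → K)} (h₀ : IsLattice O L₀) (hle : L₀ ≤ L)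
    (hfg : L.FG) : IsLattice O L :=
  ⟨hfg, eq_top_iff.mpr (h₀.2 ▸ Submodule.span_mono hle)⟩

lemma isLattice_stdLat : IsLattice O (stdLat O) := by
  refine ⟨Submodule.fg_span (Set.finite_range _), ?_⟩
  rw [stdLat, Submodule.span_span_of_tower]
  convert (Pi.basisFun K (Fin 2)).span_eq
  exact (Pi.basisFun_apply K (Fin 2) _).symm

lemma mem_stdLat_iff {x : Fin 2 → K} : x ∈ stdLat O ↔ ∀ i, x i ∈ O := by
  constructor
  · intro hx
    let integral : Submodule O (Fin 2 → K) :=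
      { carrier := {y | ∀ i, y i ∈ O}
        add_mem' := fun hy hz i => O.add_mem (hy i) (hz i)
        zero_mem' := fun _ => O.zero_mem
        smul_mem' := fun c y hy i => O.mul_mem c.2 (hy i) }
    refine (Submodule.span_le (p := integral)).mpr ?_ hx
    rintro _ ⟨j, rfl⟩ i
    rcases eq_or_ne i j with rfl | hij
    · simp [O.one_mem]
    · simp [hij, O.zero_mem]
  · intro hx
    have hsum : x = ∑ i, (⟨x i, hx i⟩ : O) • (Pi.single i 1 : Fin 2 → K) := by
      ext j
      simp [Subring.smul_def, Pi.single_apply]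
    rw [hsum]
    exact Submodule.sum_mem _ fun i _ =>
      Submodule.smul_mem _ _ (Submodule.subset_span (Set.mem_range_self i))

lemma entry_mem_of_matMap_stdLat_le {g : Matrix (Fin 2) (Fin 2) K}
    (h : matMap O g (stdLat O) ≤ stdLat O) (i j : Fin 2) : g i j ∈ O := by
  have hcol : g *ᵥ Pi.single j 1 ∈ stdLat O :=
    h ⟨_, Submodule.subset_span (Set.mem_range_self j), rfl⟩
  simpa [Matrix.mulVec_single_one] using mem_stdLat_iff.mp hcol i

lemma det_mem_of_entry_mem {g : Matrix (Fin 2) (Fin 2) K} (h : ∀ i j, g i j ∈ O) :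
    g.det ∈ O := by
  rw [Matrix.det_fin_two]
  exact O.sub_mem (O.mul_mem (h 0 0) (h 1 1)) (O.mul_mem (h 0 1) (h 1 0))

lemma trace_mem_of_entry_mem {g : Matrix (Fin 2) (Fin 2) K} (h : ∀ i j, g i j ∈ O) :
    g.trace ∈ O :=
  O.sum_mem fun i _ => h i i

section ValuationRing

variable [ValuationRing O] [IsFractionRing O K]

theorem IsLattice.exists_eq_matMap_stdLat {L : Submodule O (Fin 2 → K)} (hL : IsLattice O L) :
    ∃ P : Matrix (Fin 2) (Fin 2) K, IsUnit P ∧ L = matMap O P (stdLat O) := by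
  have : Module.Finite O L := Module.Finite.iff_fg.mpr hL.1
  -- over a valuation ring torsion-free means flat, and finite flat modules over a local ring
  -- are free
  have : Module.Flat O L := by
    rw [Module.Flat.flat_iff_torsion_eq_bot_of_isBezout,
      ← Submodule.isTorsionFree_iff_torsion_eq_bot]
    infer_instance
  have : Module.Free O L := Module.free_of_flat_of_isLocalRing
  let b := Module.Free.chooseBasis O L
  let e : _ → Fin 2 → K := L.subtype ∘ b
  have hspanO : Submodule.span O (Set.range e) = L := by
    rw [Set.range_comp, ← Submodule.map_span, b.span_eq, Submodule.map_top,
      Submodule.range_subtype]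
  have hindK : LinearIndependent K e :=
    (b.linearIndependent.map' L.subtype L.ker_subtype).localization K (nonZeroDivisors O)
  have hspanK : Submodule.span K (Set.range e) = ⊤ := by
    have := Submodule.span_span_of_tower O K (Set.range e)
    rwa [hspanO, hL.2, eq_comm] at this
  have hcard : Fintype.card (Module.Free.ChooseBasisIndex O L) = 2 := by
    rw [← finrank_span_eq_card hindK, hspanK, finrank_top, Module.finrank_fin_fun]
  let σ := (Fintype.equivFinOfCardEq hcard).symm
  refine ⟨Matrix.of fun i k => e (σ k) i, ?_, ?_⟩
  · rw [← Matrix.linearIndependent_cols_iff_isUnit]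
    exact hindK.comp σ σ.injective
  · rw [matMap, stdLat, Submodule.map_span, ← Set.range_comp]
    have hcols : (Matrix.toLin' (Matrix.of fun i k => e (σ k) i)).restrictScalars O ∘
        (fun i : Fin 2 => (Pi.single i 1 : Fin 2 → K)) = e ∘ σ := by
      ext k i
      simp
    rw [hcols, σ.surjective.range_comp, hspanO]

lemma trace_mem_and_det_inv_mem_of_matMap_eq {g : Matrix (Fin 2) (Fin 2) K} (hg : IsUnit g)
    {L : Submodule O (Fin 2 → K)} (hL : IsLattice O L) (h : matMap O g L = L) :
    g.trace ∈ O ∧ g.det⁻¹ ∈ O := by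
  obtain ⟨P, hP, rfl⟩ := hL.exists_eq_matMap_stdLat
  have hstd : ∀ {x : Matrix (Fin 2) (Fin 2) K}, matMap O x (matMap O P (stdLat O)) =
      matMap O P (stdLat O) → ∀ i j, (P⁻¹ * x * P) i j ∈ O := by
    intro x hx
    refine entry_mem_of_matMap_stdLat_le (le_of_eq ?_)
    rw [matMap_mul, matMap_mul, hx, matMap_inv_matMap hP]
  have hinv : matMap O g⁻¹ (matMap O P (stdLat O)) = matMap O P (stdLat O) := by
    conv_lhs => rw [← h]
    exact matMap_inv_matMap hg _
  constructor
  · have htr := trace_mem_of_entry_mem (hstd h)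
    rwa [Matrix.trace_mul_cycle, Matrix.mul_nonsing_inv _ ((Matrix.isUnit_iff_isUnit_det P).mp hP),
      Matrix.one_mul] at htr
  · have hdet := det_mem_of_entry_mem (hstd hinv)
    rwa [Matrix.det_conj' hP, Matrix.det_nonsing_inv, Ring.inverse_eq_inv'] at hdet

lemma FixesClass.trace_mem {g : Matrix (Fin 2) (Fin 2) K} (hdet : g.det = 1)
    {L : Submodule O (Fin 2 → K)} (hL : IsLattice O L) (hfix : FixesClass O g L) :
    g.trace ∈ O := by
  obtain ⟨c, hc, hcg⟩ := hfix
  rw [matMap_smul_one_matMap] at hcg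
  have hunit : IsUnit (c • g) := by
    rw [Matrix.isUnit_iff_isUnit_det, Matrix.det_smul, hdet, mul_one]
    exact (pow_ne_zero _ hc).isUnit
  obtain ⟨htr, hdet'⟩ := trace_mem_and_det_inv_mem_of_matMap_eq hunit hL hcg
  rw [Matrix.det_smul, hdet, mul_one, Fintype.card_fin] at hdet'
  rw [Matrix.trace_smul, smul_eq_mul] at htr
  -- `c⁻² ∈ O` forces `c⁻¹ ∈ O`, whichever of `c`, `c⁻¹` lies in the valuation ring
  have hcinv : c⁻¹ ∈ O := by
    rcases ValuationRing.isInteger_or_isInteger O c with ⟨a, ha⟩ | ⟨a, ha⟩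
    · rw [show c⁻¹ = c * (c ^ 2)⁻¹ by field_simp]
      exact O.mul_mem (ha ▸ a.2) hdet'
    · exact ha ▸ a.2
  simpa [inv_mul_cancel_left₀ hc] using O.mul_mem hcinv htr

end ValuationRing

section OrderedProduct

variable {R A ι : Type*} [CommRing R] [Ring A] [Algebra R A] [LinearOrder ι] (ρ : ι → A)

noncomputable def orderedProd (s : Finset ι) : A :=
  ((s.sort (· ≤ ·)).map ρ).prod

@[simp]
lemma orderedProd_empty : orderedProd ρ ∅ = 1 := by
  simp [orderedProd]

lemma orderedProd_insert {a : ι} {s : Finset ι} (h : ∀ b ∈ s, a < b) :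
    orderedProd ρ (insert a s) = ρ a * orderedProd ρ s := by
  rw [orderedProd,
    Finset.sort_insert _ (fun b hb => (h b hb).le) fun ha => lt_irrefl a (h a ha)]
  simp [orderedProd]

variable {ρ}

/- Induction on `s` through its least element `a`: when `a < i`, `ρ i` is moved past `ρ a` with the
anticommutation relation, and the remaining letters of the result are all larger than `a`. -/
theorem mul_orderedProd_mem_span (hsq : ∀ i, ∃ r : R, ρ i * ρ i = algebraMap R A r)
    (hanti : ∀ i j, ∃ r : R, ρ i * ρ j + ρ j * ρ i = algebraMap R A r) (i : ι) (s : Finset ι) :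
    ρ i * orderedProd ρ s ∈ Submodule.span R (orderedProd ρ '' {u | u ⊆ insert i s}) := by
  induction s using Finset.induction_on_min generalizing i with
  | empty =>
    refine Submodule.subset_span ⟨{i}, by simp, ?_⟩
    simpa using orderedProd_insert ρ (s := ∅) (a := i) (by simp)
  | insert a t hat ih =>
    have hsub : ∀ {u}, u ⊆ insert i t → u ⊆ insert i (insert a t) := fun hu =>
      hu.trans (Finset.insert_subset_insert i (Finset.subset_insert a t))
    rw [orderedProd_insert ρ hat]
    rcases lt_trichotomy i a with hia | rfl | hai
    · rw [← orderedProd_insert ρ hat, ← orderedProd_insert ρ (a := i) fun b hb => ?_]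
      · exact Submodule.subset_span ⟨_, Finset.Subset.refl _, rfl⟩
      · rcases Finset.mem_insert.mp hb with rfl | hb
        exacts [hia, hia.trans (hat b hb)]
    · obtain ⟨r, hr⟩ := hsq i
      rw [← mul_assoc, hr, Algebra.algebraMap_eq_smul_one, smul_one_mul]
      exact Submodule.smul_mem _ _
        (Submodule.subset_span ⟨t, hsub (Finset.subset_insert i t), rfl⟩)
    · obtain ⟨r, hr⟩ := hanti i a
      rw [← mul_assoc, eq_sub_of_add_eq hr, sub_mul, Algebra.algebraMap_eq_smul_one,
        smul_one_mul, mul_assoc]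
      refine sub_mem (Submodule.smul_mem _ _
        (Submodule.subset_span ⟨t, hsub (Finset.subset_insert i t), rfl⟩)) ?_
      have hmul := Submodule.mem_map_of_mem (f := LinearMap.mulLeft R (ρ a)) (ih i)
      rw [Submodule.map_span] at hmul
      refine Submodule.span_mono ?_ hmul
      rintro _ ⟨_, ⟨u, hu, rfl⟩, rfl⟩
      have hau : ∀ b ∈ u, a < b := fun b hb => by
        rcases Finset.mem_insert.mp (hu hb) with rfl | hb
        exacts [hai, hat b hb]
      refine ⟨insert a u, fun b hb => ?_, orderedProd_insert ρ hau⟩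
      rcases Finset.mem_insert.mp hb with rfl | hb
      · simp
      · exact hsub hu hb

lemma mul_mem_span_range_orderedProd (hsq : ∀ i, ∃ r : R, ρ i * ρ i = algebraMap R A r)
    (hanti : ∀ i j, ∃ r : R, ρ i * ρ j + ρ j * ρ i = algebraMap R A r) (i : ι) {x : A}
    (hx : x ∈ Submodule.span R (Set.range (orderedProd ρ))) :
    ρ i * x ∈ Submodule.span R (Set.range (orderedProd ρ)) := by
  have hmul := Submodule.mem_map_of_mem (f := LinearMap.mulLeft R (ρ i)) hx
  rw [Submodule.map_span] at hmul
  refine Submodule.span_le.mpr ?_ hmul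
  rintro _ ⟨_, ⟨s, rfl⟩, rfl⟩
  exact Submodule.span_mono (Set.image_subset_range _ _)
    (mul_orderedProd_mem_span hsq hanti i s)

end OrderedProduct

lemma isLattice_map₂_mulVec {A : Submodule O (Matrix (Fin 2) (Fin 2) K)} (hA : A.FG)
    (h1 : 1 ∈ A) {L : Submodule O (Fin 2 → K)} (hL : IsLattice O L) :
    IsLattice O (Submodule.map₂ (Matrix.mulVecBilin O O) A L) :=
  hL.of_le (fun x hx => by simpa using Submodule.apply_mem_map₂ (Matrix.mulVecBilin O O) h1 hx)
    (hA.map₂ _ hL.1)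

lemma matMap_map₂_mulVec_le {g : Matrix (Fin 2) (Fin 2) K}
    {A : Submodule O (Matrix (Fin 2) (Fin 2) K)} (hgA : ∀ x ∈ A, g * x ∈ A)
    (L : Submodule O (Fin 2 → K)) :
    matMap O g (Submodule.map₂ (Matrix.mulVecBilin O O) A L) ≤
      Submodule.map₂ (Matrix.mulVecBilin O O) A L := by
  rw [matMap, Submodule.map_le_iff_le_comap, Submodule.map₂_le]
  intro x hx y hy
  rw [Submodule.mem_comap, LinearMap.restrictScalars_apply, Matrix.toLin'_apply,
    Matrix.mulVecBilin_apply, Matrix.mulVec_mulVec]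
  exact Submodule.apply_mem_map₂ _ (hgA x hx) hy

lemma matMap_eq_of_le_of_mul_self_eq_neg_one {g : Matrix (Fin 2) (Fin 2) K}
    (hg : g * g = -1) {L : Submodule O (Fin 2 → K)} (hle : matMap O g L ≤ L) :
    matMap O g L = L := by
  refine le_antisymm hle ?_
  calc L = matMap O g (matMap O g L) := by rw [← matMap_mul, hg, matMap_neg_one]
    _ ≤ matMap O g L := Submodule.map_mono hle

theorem exists_isLattice_forall_fixesClass {ι : Type*} [Finite ι]
    {ρ : ι → Matrix (Fin 2) (Fin 2) K} (hsq : ∀ i, ρ i * ρ i = -1)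
    (hanti : ∀ i j, ∃ r : O, ρ i * ρ j + ρ j * ρ i = algebraMap O _ r) :
    ∃ L : Submodule O (Fin 2 → K), IsLattice O L ∧ ∀ i, FixesClass O (ρ i) L := by
  let _ : LinearOrder ι := WellOrderingRel.isWellOrder.linearOrder
  have hsq' : ∀ i, ∃ r : O, ρ i * ρ i = algebraMap O _ r := fun i => ⟨-1, by simp [hsq]⟩
  let A := Submodule.span O (Set.range (orderedProd ρ))
  have hA : A.FG := Submodule.fg_span (Set.finite_range _)
  have h1 : (1 : Matrix (Fin 2) (Fin 2) K) ∈ A :=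
    Submodule.subset_span ⟨∅, orderedProd_empty ρ⟩
  refine ⟨_, isLattice_map₂_mulVec hA h1 isLattice_stdLat, fun i => FixesClass.of_matMap_eq ?_⟩
  exact matMap_eq_of_le_of_mul_self_eq_neg_one (hsq i)
    (matMap_map₂_mulVec_le (fun x hx => mul_mem_span_range_orderedProd hsq' hanti i hx) _)

lemma anticomm_eq_trace_smul_one {R : Type*} [CommRing R] {X Y : Matrix (Fin 2) (Fin 2) R}
    (hX : X.trace = 0) (hY : Y.trace = 0) : X * Y + Y * X = (X * Y).trace • 1 := by
  rw [Matrix.trace_fin_two] at hX hY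
  rw [Matrix.eta_fin_two X, Matrix.eta_fin_two Y, eq_neg_of_add_eq_zero_right hX,
    eq_neg_of_add_eq_zero_right hY]
  ext i j
  fin_cases i <;> fin_cases j <;> simp [Matrix.trace_fin_two] <;> ring

section ConjugateOfJ

variable {C : Matrix (Fin 2) (Fin 2) K}

lemma conj_J_mul_self (hC : IsUnit C) :
    C * !![0, -1; 1, 0] * C⁻¹ * (C * !![0, -1; 1, 0] * C⁻¹) = -1 := by
  have hJ : (!![0, -1; 1, 0] : Matrix (Fin 2) (Fin 2) K) * !![0, -1; 1, 0] = -1 := by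
    ext i j
    fin_cases i <;> fin_cases j <;> simp
  have hCdet := (Matrix.isUnit_iff_isUnit_det C).mp hC
  simp only [Matrix.mul_assoc, Matrix.nonsing_inv_mul_cancel_left _ _ hCdet]
  rw [← Matrix.mul_assoc !![0, -1; 1, 0], hJ, Matrix.neg_mul, Matrix.one_mul, Matrix.mul_neg,
    Matrix.mul_nonsing_inv _ hCdet]

lemma det_conj_J (hC : IsUnit C) : (C * !![0, -1; 1, 0] * C⁻¹).det = 1 := by
  simp [Matrix.det_conj hC, Matrix.det_fin_two_of]

lemma trace_conj_J (hC : IsUnit C) : (C * !![0, -1; 1, 0] * C⁻¹).trace = 0 := by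
  rw [Matrix.trace_mul_cycle, Matrix.nonsing_inv_mul _ ((Matrix.isUnit_iff_isUnit_det C).mp hC)]
  simp [Matrix.trace_fin_two]

end ConjugateOfJ

theorem exists_forall_fixesClass_iff_exists_forall_conj {ι : Type*}
    {C : ι → Matrix (Fin 2) (Fin 2) K} (hC : ∀ j, IsUnit (C j)) {g : Matrix (Fin 2) (Fin 2) K}
    {ρ : ι → Matrix (Fin 2) (Fin 2) K} (hρ : ∀ j, ρ j = C j * g * (C j)⁻¹) :
    (∃ L : Submodule O (Fin 2 → K), IsLattice O L ∧ ∀ j, FixesClass O (ρ j) L) ↔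
      ∃ L : Submodule O (Fin 2 → K), IsLattice O L ∧ ∀ j, ∃ L' : Submodule O (Fin 2 → K),
        IsLattice O L' ∧ FixesClass O g L' ∧ LatEquiv O (matMap O (C j) L') L := by
  refine ⟨fun ⟨L, hL, hfix⟩ => ⟨L, hL, fun j => ?_⟩,
    fun ⟨L, hL, hfix⟩ => ⟨L, hL, fun j => ?_⟩⟩
  · refine ⟨matMap O (C j)⁻¹ L, isLattice_matMap (Matrix.isUnit_nonsing_inv_iff.mpr (hC j)) hL,
      ?_, ?_⟩
    · rw [← FixesClass.conj_iff (hC j), matMap_matMap_inv (hC j), ← hρ]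
      exact hfix j
    · rw [matMap_matMap_inv (hC j)]
      exact LatEquiv.refl L
  · obtain ⟨L', -, hg, hL'⟩ := hfix j
    exact hρ j ▸ ((FixesClass.conj_iff (hC j)).mpr hg).of_latEquiv hL'

theorem exists_isLattice_forall_fixesClass_of_forall_mul [ValuationRing O]
    [IsFractionRing O K] {ι : Type*} [Finite ι] {ρ : ι → Matrix (Fin 2) (Fin 2) K}
    (hsq : ∀ i, ρ i * ρ i = -1)
    (hdet : ∀ i, (ρ i).det = 1) (htr : ∀ i, (ρ i).trace = 0)
    (h : ∀ i j, ∃ L : Submodule O (Fin 2 → K), IsLattice O L ∧ FixesClass O (ρ i * ρ j) L) :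
    ∃ L : Submodule O (Fin 2 → K), IsLattice O L ∧ ∀ i, FixesClass O (ρ i) L := by
  refine exists_isLattice_forall_fixesClass hsq fun i j => ?_
  obtain ⟨L, hL, hfix⟩ := h i j
  have hdet' : (ρ i * ρ j).det = 1 := by rw [Matrix.det_mul, hdet, hdet, one_mul]
  refine ⟨⟨_, hfix.trace_mem hdet' hL⟩, ?_⟩
  rw [anticomm_eq_trace_smul_one (htr i) (htr j), Algebra.algebraMap_eq_smul_one]
  rfl

theorem stmt_8_general {ι : Type*} [Fintype ι]
    (v : Valuation K (WithZero (Multiplicative ℤ)))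
    (C : ι → Matrix (Fin 2) (Fin 2) K) (hC : ∀ j, (C j).det ≠ 0)
    (ρ : ι → Matrix (Fin 2) (Fin 2) K)
    (hρ : ∀ j, ρ j = C j * !![0, -1; 1, 0] * (C j)⁻¹) :
    ((∃ L : Submodule v.integer (Fin 2 → K), IsLattice v.integer L ∧
        ∀ j, FixesClass v.integer (ρ j) L) ↔
      (∃ L : Submodule v.integer (Fin 2 → K), IsLattice v.integer L ∧
        ∀ j, ∃ L' : Submodule v.integer (Fin 2 → K), IsLattice v.integer L' ∧
          FixesClass v.integer !![0, -1; 1, 0] L' ∧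
          LatEquiv v.integer (matMap v.integer (C j) L') L)) ∧
    ((∃ L : Submodule v.integer (Fin 2 → K), IsLattice v.integer L ∧
        ∀ j, FixesClass v.integer (ρ j) L) ↔
      (∀ m k, ∃ L : Submodule v.integer (Fin 2 → K), IsLattice v.integer L ∧
        FixesClass v.integer (ρ m * ρ k) L)) := by
  have hCu : ∀ j, IsUnit (C j) := fun j => (Matrix.isUnit_iff_isUnit_det _).mpr (hC j).isUnit
  refine ⟨exists_forall_fixesClass_iff_exists_forall_conj hCu hρ,
    fun ⟨L, hL, hfix⟩ m k => ⟨L, hL, (hfix m).mul (hfix k)⟩, ?_⟩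
  exact exists_isLattice_forall_fixesClass_of_forall_mul
    (fun j => hρ j ▸ conj_J_mul_self (hCu j)) (fun j => hρ j ▸ det_conj_J (hCu j))
    (fun j => hρ j ▸ trace_conj_J (hCu j))

theorem stmt_8 {ι : Type*} [Fintype ι]
    (v : Valuation K (WithZero (Multiplicative ℤ)))
    (hdisc : Function.Surjective v)
    (C : ι → Matrix (Fin 2) (Fin 2) K) (hC : ∀ j, (C j).det ≠ 0)
    (ρ : ι → Matrix (Fin 2) (Fin 2) K)
    (hρ : ∀ j, ρ j = C j * !![0, -1; 1, 0] * (C j)⁻¹) :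
    ((∃ L : Submodule v.integer (Fin 2 → K), IsLattice v.integer L ∧
        ∀ j, FixesClass v.integer (ρ j) L) ↔
      (∃ L : Submodule v.integer (Fin 2 → K), IsLattice v.integer L ∧
        ∀ j, ∃ L' : Submodule v.integer (Fin 2 → K), IsLattice v.integer L' ∧
          FixesClass v.integer !![0, -1; 1, 0] L' ∧
          LatEquiv v.integer (matMap v.integer (C j) L') L)) ∧
    ((∃ L : Submodule v.integer (Fin 2 → K), IsLattice v.integer L ∧
        ∀ j, FixesClass v.integer (ρ j) L) ↔
      (∀ m k, ∃ L : Submodule v.integer (Fin 2 → K), IsLattice v.integer L ∧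
        FixesClass v.integer (ρ m * ρ k) L)) :=
  stmt_8_general v C hC ρ hρ
end
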